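/- Let X_1, ..., X_m be iid Pareto(γ) random variables with γ ∈ (0,1). For every ε ∈ (0,1) there is δ > 0, independent of m, such that P(max_{i≤m} X_i ≥ ε ∑_{i≤m} X_i) ≥ δ for all m ≥ 1. -/

import Mathlib

/-!
Put `b := ((1 - γ) / (4 m)) ^ (-1/γ)`, of the order `m ^ (1/γ)` of the maximum, and
`t := b / (1 - ε)`. Truncated at level `b`, each variable has mean at most
`b ^ (1 - γ) / (1 - γ)`, so by a union bound and Markov's inequality the
sum of any `m - 1` of the `X j` stays below `b` with probability at least `1/2`. The events
`E i = {X i > t, ∑_{j ≠ i} X j ≤ b}` force `X i ≥ ε ∑ X j`; by independence each has probability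
at least `t ^ (-γ) / 2`, and since the `X j` are almost surely positive they are almost surely
disjoint. Summing over `i` gives `m t ^ (-γ) / 2 = (1 - ε) ^ γ (1 - γ) / 8`, independently of `m`.
-/

open MeasureTheory ProbabilityTheory Set
open scoped ENNReal

/-- The maximum of `f 0, …, f (m-1)` (junk value `0` if `m = 0`). -/
noncomputable def firstMax (m : ℕ) (f : ℕ → ℝ) : ℝ :=
  if hm : 1 ≤ m then
    (Finset.range m).sup' (Finset.nonempty_range_iff.mpr (by omega)) f
  else 0

theorem le_firstMax {m i : ℕ} (hi : i ∈ Finset.range m) (f : ℕ → ℝ) : f i ≤ firstMax m f := by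
  have hm : 1 ≤ m := Nat.one_le_iff_ne_zero.2 (Finset.nonempty_range_iff.1 ⟨i, hi⟩)
  rw [firstMax, dif_pos hm]
  exact Finset.le_sup' f hi

section SumErase

variable {ι : Type*} [DecidableEq ι] {s : Finset ι} {f : ι → ℝ} {i j : ι} {b t : ℝ}

theorem mul_sum_le_of_lt_of_sum_erase_le {ε : ℝ} (hi : i ∈ s) (hε0 : 0 ≤ ε) (hε1 : ε ≤ 1)
    (hεbt : ε * b ≤ (1 - ε) * t) (hfi : t < f i) (hsum : ∑ k ∈ s.erase i, f k ≤ b) :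
    ε * ∑ k ∈ s, f k ≤ f i := by
  rw [← Finset.add_sum_erase s f hi]
  nlinarith [mul_le_mul_of_nonneg_left hsum hε0,
    mul_le_mul_of_nonneg_left hfi.le (sub_nonneg.2 hε1)]

theorem eq_of_lt_of_sum_erase_le (hf : ∀ k ∈ s, 0 ≤ f k) (hbt : b ≤ t) (hj : j ∈ s)
    (hfj : t < f j) (hsum : ∑ k ∈ s.erase i, f k ≤ b) : i = j := by
  by_contra hij
  have := Finset.single_le_sum (fun k hk => hf k (Finset.mem_of_mem_erase hk))
    (Finset.mem_erase.2 ⟨Ne.symm hij, hj⟩)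
  linarith

end SumErase

theorem setLIntegral_Ioc_rpow_neg {γ b : ℝ} (hγ1 : γ < 1) (hb : 0 ≤ b) :
    ∫⁻ t in Ioc 0 b, ENNReal.ofReal (t ^ (-γ)) = ENNReal.ofReal (b ^ (1 - γ) / (1 - γ)) := by
  rw [← ofReal_integral_eq_lintegral_ofReal, ← intervalIntegral.integral_of_le hb,
    integral_rpow (Or.inl (by linarith)), Real.zero_rpow (by linarith), sub_zero, neg_add_eq_sub]
  · exact (intervalIntegrable_iff_integrableOn_Ioc_of_le hb).mp
      (intervalIntegral.intervalIntegrable_rpow' (by linarith))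
  · filter_upwards [ae_restrict_mem measurableSet_Ioc] with t ht
    exact Real.rpow_nonneg ht.1.le _

section ParetoTail

variable {Ω : Type*} [MeasurableSpace Ω] {μ : Measure Ω} [IsProbabilityMeasure μ] {γ : ℝ}

theorem lintegral_truncation_le (hγ0 : 0 ≤ γ) (hγ1 : γ < 1) {Z : Ω → ℝ} (hZ : Measurable Z)
    (htail : ∀ s, 1 ≤ s → μ {ω | s < Z ω} ≤ ENNReal.ofReal (s ^ (-γ))) {b : ℝ} (hb : 1 ≤ b) :
    ∫⁻ ω, ENNReal.ofReal (min b (max 1 (Z ω))) ∂μ ≤ ENNReal.ofReal (b ^ (1 - γ) / (1 - γ)) := by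
  have hb0 : 0 < b := one_pos.trans_le hb
  have hlevel : ∀ t ∈ Ioi (0 : ℝ), μ {ω | t < min b (max 1 (Z ω))} ≤
      (Ioc 0 b).indicator (fun t => ENNReal.ofReal (t ^ (-γ))) t := by
    intro t (ht : 0 < t)
    rcases le_or_gt t b with htb | hbt
    · rw [indicator_of_mem (show t ∈ Ioc 0 b from ⟨ht, htb⟩)]
      rcases le_or_gt t 1 with ht1 | ht1
      · refine prob_le_one.trans ?_
        rw [← ENNReal.ofReal_one]
        exact ENNReal.ofReal_le_ofReal
          (Real.one_le_rpow_of_pos_of_le_one_of_nonpos ht ht1 (by linarith))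
      · refine (measure_mono fun ω (hω : t < min b (max 1 (Z ω))) => ?_).trans (htail t ht1.le)
        rcases lt_max_iff.1 (lt_min_iff.1 hω).2 with h | h
        · exact absurd ht1 h.not_gt
        · exact h
    · rw [indicator_of_notMem fun h => hbt.not_ge h.2]
      exact (measure_mono_null (fun ω (hω : t < min b (max 1 (Z ω))) =>
        hbt.not_gt (hω.trans_le (min_le_left _ _))) measure_empty).le
  rw [lintegral_eq_lintegral_meas_lt μ
    (ae_of_all _ fun ω => le_min hb0.le (zero_le_one.trans (le_max_left _ _)))
    (measurable_const.min (measurable_const.max hZ)).aemeasurable]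
  calc ∫⁻ t in Ioi 0, μ {ω | t < min b (max 1 (Z ω))}
      ≤ ∫⁻ t in Ioi 0, (Ioc 0 b).indicator (fun t => ENNReal.ofReal (t ^ (-γ))) t :=
        setLIntegral_mono ((by fun_prop : Measurable fun t : ℝ => ENNReal.ofReal (t ^ (-γ)))
          |>.indicator measurableSet_Ioc) hlevel
    _ = ∫⁻ t in Ioc 0 b, ENNReal.ofReal (t ^ (-γ)) := by
        rw [lintegral_indicator measurableSet_Ioc, Measure.restrict_restrict measurableSet_Ioc,
          inter_eq_self_of_subset_left Ioc_subset_Ioi_self]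
    _ = ENNReal.ofReal (b ^ (1 - γ) / (1 - γ)) := setLIntegral_Ioc_rpow_neg hγ1 hb0.le

section Sums

variable {ι : Type*} {X : ι → Ω → ℝ}

theorem measure_sum_truncation_ge_le (hγ0 : 0 ≤ γ) (hγ1 : γ < 1) (hX : ∀ i, Measurable (X i))
    (htail : ∀ i, ∀ s, 1 ≤ s → μ {ω | s < X i ω} ≤ ENNReal.ofReal (s ^ (-γ)))
    (s : Finset ι) {b : ℝ} (hb : 1 ≤ b) :
    μ {ω | b ≤ ∑ j ∈ s, min b (max 1 (X j ω))} ≤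
      ENNReal.ofReal (s.card * b ^ (-γ) / (1 - γ)) := by
  have hb0 : 0 < b := one_pos.trans_le hb
  have hY0 : ∀ j ω, 0 ≤ min b (max 1 (X j ω)) :=
    fun j ω => le_min hb0.le (zero_le_one.trans (le_max_left _ _))
  have hYm : ∀ j, Measurable fun ω => ENNReal.ofReal (min b (max 1 (X j ω))) :=
    fun j => (measurable_const.min (measurable_const.max (hX j))).ennreal_ofReal
  calc μ {ω | b ≤ ∑ j ∈ s, min b (max 1 (X j ω))}
      = μ {ω | ENNReal.ofReal b ≤ ∑ j ∈ s, ENNReal.ofReal (min b (max 1 (X j ω)))} := by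
        congr with ω
        rw [← ENNReal.ofReal_sum_of_nonneg fun j _ => hY0 j ω,
          ENNReal.ofReal_le_ofReal_iff (Finset.sum_nonneg fun j _ => hY0 j ω)]
    _ ≤ (∫⁻ ω, ∑ j ∈ s, ENNReal.ofReal (min b (max 1 (X j ω))) ∂μ) / ENNReal.ofReal b :=
        meas_ge_le_lintegral_div (Finset.measurable_sum s fun j _ => hYm j).aemeasurable
          (by simpa using hb0) ENNReal.ofReal_ne_top
    _ ≤ (∑ _j ∈ s, ENNReal.ofReal (b ^ (1 - γ) / (1 - γ))) / ENNReal.ofReal b := by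
        rw [lintegral_finsetSum s fun j _ => hYm j]
        gcongr with j
        exact lintegral_truncation_le hγ0 hγ1 (hX j) (htail j) hb
    _ = ENNReal.ofReal (s.card * b ^ (-γ) / (1 - γ)) := by
        rw [Finset.sum_const, nsmul_eq_mul, ← ENNReal.ofReal_natCast,
          ← ENNReal.ofReal_mul (Nat.cast_nonneg _), ← ENNReal.ofReal_div_of_pos hb0,
          Real.rpow_sub hb0, Real.rpow_one, Real.rpow_neg hb0.le]
        congr 1
        field_simp

theorem measure_sum_gt_le (hγ0 : 0 ≤ γ) (hγ1 : γ < 1) (hX : ∀ i, Measurable (X i))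
    (htail : ∀ i, ∀ s, 1 ≤ s → μ {ω | s < X i ω} ≤ ENNReal.ofReal (s ^ (-γ)))
    (s : Finset ι) {b : ℝ} (hb : 1 ≤ b) :
    μ {ω | b < ∑ j ∈ s, X j ω} ≤ ENNReal.ofReal (2 * s.card * b ^ (-γ) / (1 - γ)) := by
  have hsub : {ω | b < ∑ j ∈ s, X j ω} ⊆
      (⋃ j ∈ s, {ω | b < X j ω}) ∪ {ω | b ≤ ∑ j ∈ s, min b (max 1 (X j ω))} := by
    intro ω (hω : b < ∑ j ∈ s, X j ω)
    by_cases hall : ∀ j ∈ s, X j ω ≤ b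
    · exact Or.inr <| hω.le.trans <|
        Finset.sum_le_sum fun j hj => le_min (hall j hj) (le_max_right _ _)
    · obtain ⟨j, hj, hbj⟩ : ∃ j ∈ s, b < X j ω := by simpa using hall
      exact Or.inl (mem_biUnion hj hbj)
  have hunion : μ (⋃ j ∈ s, {ω | b < X j ω}) ≤ ENNReal.ofReal (s.card * b ^ (-γ)) :=
    calc μ (⋃ j ∈ s, {ω | b < X j ω}) ≤ ∑ j ∈ s, μ {ω | b < X j ω} :=
          measure_biUnion_finset_le s _
      _ ≤ ∑ _j ∈ s, ENNReal.ofReal (b ^ (-γ)) := Finset.sum_le_sum fun j _ => htail j b hb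
      _ = ENNReal.ofReal (s.card * b ^ (-γ)) := by
        rw [Finset.sum_const, nsmul_eq_mul, ← ENNReal.ofReal_natCast,
          ← ENNReal.ofReal_mul (Nat.cast_nonneg _)]
  calc μ {ω | b < ∑ j ∈ s, X j ω}
      ≤ μ (⋃ j ∈ s, {ω | b < X j ω}) + μ {ω | b ≤ ∑ j ∈ s, min b (max 1 (X j ω))} :=
        (measure_mono hsub).trans (measure_union_le _ _)
    _ ≤ ENNReal.ofReal (s.card * b ^ (-γ)) + ENNReal.ofReal (s.card * b ^ (-γ) / (1 - γ)) :=
        add_le_add hunion (measure_sum_truncation_ge_le hγ0 hγ1 hX htail s hb)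
    _ ≤ ENNReal.ofReal (2 * s.card * b ^ (-γ) / (1 - γ)) := by
        rw [← ENNReal.ofReal_add (by positivity) (by positivity)]
        refine ENNReal.ofReal_le_ofReal ?_
        have hu : (s.card : ℝ) * b ^ (-γ) ≤ s.card * b ^ (-γ) / (1 - γ) :=
          le_div_self (by positivity) (by linarith) (by linarith)
        have htwo : 2 * (s.card : ℝ) * b ^ (-γ) / (1 - γ) =
            2 * (s.card * b ^ (-γ) / (1 - γ)) := by ring
        linarith

theorem inv_two_le_measure_sum_le (hγ0 : 0 ≤ γ) (hγ1 : γ < 1) (hX : ∀ i, Measurable (X i))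
    (htail : ∀ i, ∀ s, 1 ≤ s → μ {ω | s < X i ω} ≤ ENNReal.ofReal (s ^ (-γ)))
    (s : Finset ι) {b : ℝ} (hb : 1 ≤ b) (hsb : 4 * s.card * b ^ (-γ) ≤ 1 - γ) :
    2⁻¹ ≤ μ {ω | ∑ j ∈ s, X j ω ≤ b} := by
  have hgt : μ {ω | b < ∑ j ∈ s, X j ω} ≤ 2⁻¹ :=
    calc μ {ω | b < ∑ j ∈ s, X j ω} ≤ ENNReal.ofReal (2 * s.card * b ^ (-γ) / (1 - γ)) :=
          measure_sum_gt_le hγ0 hγ1 hX htail s hb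
      _ ≤ ENNReal.ofReal 2⁻¹ := ENNReal.ofReal_le_ofReal <| by
          rw [div_le_iff₀ (by linarith)]
          linarith
      _ = 2⁻¹ := by rw [ENNReal.ofReal_inv_of_pos two_pos, ENNReal.ofReal_ofNat]
  have hcompl : {ω | ∑ j ∈ s, X j ω ≤ b} = {ω | b < ∑ j ∈ s, X j ω}ᶜ := by
    ext ω
    simp
  rw [hcompl, prob_compl_eq_one_sub
    (measurableSet_lt measurable_const (Finset.measurable_sum s fun j _ => hX j)),
    ← ENNReal.one_sub_inv_two]
  exact tsub_le_tsub_left hgt 1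

end Sums

theorem le_measure_mul_sum_le_firstMax {X : ℕ → Ω → ℝ} (hγ0 : 0 ≤ γ) (hγ1 : γ < 1)
    (hX : ∀ i, Measurable (X i)) (hindep : iIndepFun X μ)
    (htail : ∀ i, ∀ s, 1 ≤ s → μ {ω | s < X i ω} = ENNReal.ofReal (s ^ (-γ)))
    {ε b t : ℝ} (hε0 : 0 ≤ ε) (hε1 : ε ≤ 1) (hb : 1 ≤ b) (hbt : b ≤ t)
    (hεbt : ε * b ≤ (1 - ε) * t) {m : ℕ} (hmb : 4 * m * b ^ (-γ) ≤ 1 - γ) :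
    ENNReal.ofReal (m * t ^ (-γ) / 2) ≤
      μ {ω | ε * ∑ i ∈ Finset.range m, X i ω ≤ firstMax m fun i => X i ω} := by
  set E : ℕ → Set Ω := fun i =>
    {ω | t < X i ω} ∩ {ω | ∑ j ∈ (Finset.range m).erase i, X j ω ≤ b}
  have hEm : ∀ i, MeasurableSet (E i) := fun i =>
    (measurableSet_lt measurable_const (hX i)).inter
      (measurableSet_le (Finset.measurable_sum _ fun j _ => hX j) measurable_const)
  have hEμ : ∀ i ∈ Finset.range m, ENNReal.ofReal (t ^ (-γ)) * 2⁻¹ ≤ μ (E i) := by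
    intro i _
    have hindep_i := (hindep.indepFun_finsetSum_of_notMem hX
      (Finset.notMem_erase i (Finset.range m))).symm
    have hcard : 4 * ((Finset.range m).erase i).card * b ^ (-γ) ≤ 1 - γ := by
      refine le_trans ?_ hmb
      gcongr
      exact_mod_cast (Finset.card_erase_le).trans (Finset.card_range m).le
    calc ENNReal.ofReal (t ^ (-γ)) * 2⁻¹
        ≤ μ {ω | t < X i ω} * μ {ω | ∑ j ∈ (Finset.range m).erase i, X j ω ≤ b} := by
          rw [htail i t (hb.trans hbt)]
          gcongr
          exact inv_two_le_measure_sum_le hγ0 hγ1 hX (fun j s hs => (htail j s hs).le) _ hb hcard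
      _ = μ (E i) := by
          have hpre : {ω | ∑ j ∈ (Finset.range m).erase i, X j ω ≤ b} =
              (∑ j ∈ (Finset.range m).erase i, X j) ⁻¹' Iic b := by
            ext ω
            simp [Finset.sum_apply]
          show _ = μ ({ω | t < X i ω} ∩ {ω | ∑ j ∈ (Finset.range m).erase i, X j ω ≤ b})
          rw [hpre]
          exact (hindep_i.measure_inter_preimage_eq_mul (Ioi t) (Iic b)
            measurableSet_Ioi measurableSet_Iic).symm
  have hpos : ∀ᵐ ω ∂μ, ∀ k, 0 ≤ X k ω := by
    refine ae_all_iff.2 fun k => ?_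
    have h : μ {ω | 1 < X k ω}ᶜ = 0 :=
      (prob_compl_eq_zero_iff (measurableSet_lt measurable_const (hX k))).2
        (by rw [htail k 1 le_rfl, Real.one_rpow, ENNReal.ofReal_one])
    exact (ae_iff.2 h).mono fun ω (hω : 1 < X k ω) => zero_le_one.trans hω.le
  have hdisj : (Finset.range m : Set ℕ).Pairwise (Function.onFun (AEDisjoint μ) E) := by
    intro i _ j hj hij
    refine measure_mono_null ?_ (ae_iff.1 hpos)
    rintro ω ⟨⟨-, hsum⟩, hfj, -⟩ hnonneg
    exact hij <| eq_of_lt_of_sum_erase_le (fun k _ => hnonneg k) hbt hj hfj hsum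
  calc ENNReal.ofReal (m * t ^ (-γ) / 2)
      = ∑ _i ∈ Finset.range m, ENNReal.ofReal (t ^ (-γ)) * 2⁻¹ := by
        rw [Finset.sum_const, Finset.card_range, nsmul_eq_mul, mul_div_assoc,
          ENNReal.ofReal_mul (Nat.cast_nonneg _), ENNReal.ofReal_natCast,
          ENNReal.ofReal_div_of_pos two_pos, ENNReal.ofReal_ofNat, div_eq_mul_inv]
    _ ≤ ∑ i ∈ Finset.range m, μ (E i) := Finset.sum_le_sum hEμ
    _ = μ (⋃ i ∈ Finset.range m, E i) :=
        (measure_biUnion_finset₀ hdisj fun i _ => (hEm i).nullMeasurableSet).symm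
    _ ≤ μ {ω | ε * ∑ i ∈ Finset.range m, X i ω ≤ firstMax m fun i => X i ω} :=
        measure_mono <| iUnion₂_subset fun i hi ω ⟨hti, hsum⟩ =>
          (mul_sum_le_of_lt_of_sum_erase_le hi hε0 hε1 hεbt hti hsum).trans
            (le_firstMax hi fun i => X i ω)

end ParetoTail

/-- For iid Pareto(γ) random variables with `0 < γ < 1` and every `ε ∈ (0,1)` there is
`δ > 0`, independent of `m`, such that `P(max_{i≤m} X_i ≥ ε ∑_{i≤m} X_i) ≥ δ` for all
`m ≥ 1`. -/
theorem max_dominates_sum_uniform {Ω : Type*} [MeasurableSpace Ω] (μ : Measure Ω)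
    [IsProbabilityMeasure μ] (γ : ℝ) (hγ0 : 0 < γ) (hγ1 : γ < 1)
    (X : ℕ → Ω → ℝ) (hmeas : ∀ i, Measurable (X i))
    (hindep : iIndepFun X μ)
    (htail : ∀ i, ∀ s : ℝ, 1 ≤ s → μ {ω | s < X i ω} = ENNReal.ofReal (s ^ (-γ))) :
    ∀ ε : ℝ, 0 < ε → ε < 1 → ∃ δ : ℝ, 0 < δ ∧ ∀ m : ℕ, 1 ≤ m →
      ENNReal.ofReal δ ≤
        μ {ω | ε * ∑ i ∈ Finset.range m, X i ω ≤ firstMax m fun i => X i ω} := by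
  intro ε hε0 hε1
  have hε : 0 < 1 - ε := sub_pos.2 hε1
  refine ⟨(1 - ε) ^ γ * (1 - γ) / 8, by have := sub_pos.2 hγ1; positivity, fun m hm => ?_⟩
  have hbase : 0 < (1 - γ) / (4 * m) := by
    have : (0 : ℝ) < m := by exact_mod_cast hm
    have := sub_pos.2 hγ1
    positivity
  set b := ((1 - γ) / (4 * m)) ^ (-γ⁻¹)
  have hbγ : b ^ (-γ) = (1 - γ) / (4 * m) := by
    rw [← Real.rpow_mul hbase.le, neg_mul_neg, inv_mul_cancel₀ hγ0.ne', Real.rpow_one]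
  have hb : 1 ≤ b := Real.one_le_rpow_of_pos_of_le_one_of_nonpos hbase
    (div_le_one_of_le₀ (by linarith [(Nat.one_le_cast (α := ℝ)).2 hm]) (by positivity))
    (by simp [hγ0.le])
  have hb0 : 0 < b := one_pos.trans_le hb
  convert le_measure_mul_sum_le_firstMax hγ0.le hγ1 hmeas hindep htail hε0.le hε1.le hb
    (le_div_self hb0.le hε (by linarith))
    (by rw [mul_div_cancel₀ _ hε.ne']; exact mul_le_of_le_one_left hb0.le hε1.le)
    (m := m) (by rw [hbγ, mul_div_cancel₀ _ (by positivity)]) using 2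
  rw [Real.div_rpow hb0.le hε.le, hbγ, Real.rpow_neg hε.le]
  field_simp
  ring
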